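/- arXiv:1904.11648 — 2 statements merged into one kernel-verified Lean document; each statement's English description precedes it below -/
import Mathlib

section
/- Let b = (b₁, b₂) ∈ ℝ² and λ₁, λ₂, λ₃ > 0. The function l(θ) = (1/2)‖θ − b‖² + λ₁‖θ‖₂ + λ₂‖θ‖₂² + λ₃|θ₂| over θ = (θ₁, θ₂) ∈ ℝ² is uniquely minimized at θ₁ = (1/(1+2λ₂))·(1 − λ₁/√(b₁² + s(b₂,λ₃)²))₊ · b₁ and θ₂ = (1/(1+2λ₂))·(1 − λ₁/√(b₁² + s(b₂,λ₃)²))₊ · s(b₂, λ₃), where s(b₂, λ₃) = sign(b₂)(|b₂| − λ₃)₊, with the convention that θ = (0,0) when √(b₁² + s(b₂,λ₃)²) ≤ λ₁. -/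
/-!
Let `s` be the soft-threshold of `b₂` at `λ₃`. Up to a constant,
`l(θ) = G(θ) + (λ₃|θ₂| - (b₂ - s) θ₂)` with `G(θ) = ½‖θ - (b₁, s)‖² + λ₁‖θ‖ + λ₂‖θ‖²`.
Since `|b₂ - s| ≤ λ₃` and `s (b₂ - s) = λ₃|s|`, the second summand is nonnegative and vanishes
at `c s` for every `c ≥ 0`. The function `G` is `(1 + 2λ₂)`-strongly convex, and at the shrunk
point `p = c (b₁, s)` the vector `(b₁, s) - (1 + 2λ₂) p` is `λ₁` times a subgradient of the norm,
so `G(θ) ≥ G(p) + (1 + 2λ₂)/2 ‖θ - p‖²`.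
-/

open scoped InnerProductSpace

section ProxOfNormPenalty

variable {E : Type*} [NormedAddCommGroup E] [InnerProductSpace ℝ E]

theorem inner_sub_le_mul_norm_sub_norm {r : ℝ} {v p : E} (hv : ‖v‖ ≤ r)
    (hp : ⟪p, v⟫_ℝ = r * ‖p‖) (x : E) : ⟪x - p, v⟫_ℝ ≤ r * (‖x‖ - ‖p‖) :=
  calc ⟪x - p, v⟫_ℝ = ⟪x, v⟫_ℝ - r * ‖p‖ := by rw [inner_sub_left, hp]
    _ ≤ ‖x‖ * r - r * ‖p‖ := by
        gcongr
        exact (real_inner_le_norm x v).trans (by gcongr)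
    _ = r * (‖x‖ - ‖p‖) := by ring

theorem half_norm_sub_sq_add_mul_norm_sq (b p x : E) (μ : ℝ) :
    1 / 2 * ‖x - b‖ ^ 2 + μ * ‖x‖ ^ 2 =
      1 / 2 * ‖p - b‖ ^ 2 + μ * ‖p‖ ^ 2 + ⟪x - p, (1 + 2 * μ) • p - b⟫_ℝ
        + (1 + 2 * μ) / 2 * ‖x - p‖ ^ 2 := by
  obtain ⟨d, rfl⟩ : ∃ d, x = p + d := ⟨x - p, by abel⟩
  rw [add_sub_cancel_left, show p + d - b = d + (p - b) by abel, norm_add_sq_real,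
    norm_add_sq_real, inner_sub_right, inner_sub_right, inner_smul_right, real_inner_comm p d]
  ring

noncomputable def proxObjective (a μ : ℝ) (b x : E) : ℝ :=
  1 / 2 * ‖x - b‖ ^ 2 + a * ‖x‖ + μ * ‖x‖ ^ 2

noncomputable def proxPoint (a μ : ℝ) (b : E) : E :=
  (1 / (1 + 2 * μ) * max (1 - a / ‖b‖) 0) • b

theorem proxObjective_add_le_of_subgradient {a μ : ℝ} {b p : E}
    (hv : ‖b - (1 + 2 * μ) • p‖ ≤ a) (hp : ⟪p, b - (1 + 2 * μ) • p⟫_ℝ = a * ‖p‖) (x : E) :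
    proxObjective a μ b p + (1 + 2 * μ) / 2 * ‖x - p‖ ^ 2 ≤ proxObjective a μ b x := by
  have hexp := half_norm_sub_sq_add_mul_norm_sq b p x μ
  have hsub := inner_sub_le_mul_norm_sub_norm hv hp x
  rw [← neg_sub b ((1 + 2 * μ) • p), inner_neg_right] at hexp
  unfold proxObjective
  linarith

theorem proxPoint_subgradient {a μ : ℝ} (ha : 0 ≤ a) (hμ : 0 < 1 + 2 * μ) (b : E) :
    ‖b - (1 + 2 * μ) • proxPoint a μ b‖ ≤ a ∧
      ⟪proxPoint a μ b, b - (1 + 2 * μ) • proxPoint a μ b⟫_ℝ = a * ‖proxPoint a μ b‖ := by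
  have hκp : (1 + 2 * μ) • proxPoint a μ b = max (1 - a / ‖b‖) 0 • b := by
    rw [proxPoint, smul_smul]
    congr 1
    field_simp
  rw [hκp]
  rcases le_or_gt ‖b‖ a with hb | hb
  · have hshrink : max (1 - a / ‖b‖) 0 • b = 0 := by
      rcases (norm_nonneg b).eq_or_lt with hb0 | hb0
      · rw [norm_eq_zero.mp hb0.symm, smul_zero]
      · rw [max_eq_right (by rw [sub_nonpos, one_le_div hb0]; exact hb), zero_smul]
    have hp : proxPoint a μ b = 0 := by
      rw [proxPoint, mul_smul, hshrink, smul_zero]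
    simp [hshrink, hp, hb]
  · have hb0 : 0 < ‖b‖ := ha.trans_lt hb
    have hm : max (1 - a / ‖b‖) 0 = 1 - a / ‖b‖ :=
      max_eq_left (by rw [sub_nonneg, div_le_one hb0]; exact hb.le)
    have hres : b - (1 - a / ‖b‖) • b = (a / ‖b‖) • b := by module
    have hc : 0 ≤ 1 / (1 + 2 * μ) * (1 - a / ‖b‖) := by
      rw [← hm]; positivity
    rw [hm, hres, proxPoint, hm, norm_smul, norm_smul, inner_smul_left, inner_smul_right,
      real_inner_self_eq_norm_sq, Real.norm_eq_abs, Real.norm_eq_abs, abs_of_nonneg hc,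
      abs_of_nonneg (by positivity)]
    constructor
    · rw [div_mul_cancel₀ _ hb0.ne']
    · simp only [conj_trivial]
      field_simp

theorem proxObjective_proxPoint_add_le {a μ : ℝ} (ha : 0 ≤ a) (hμ : 0 < 1 + 2 * μ) (b x : E) :
    proxObjective a μ b (proxPoint a μ b) + (1 + 2 * μ) / 2 * ‖x - proxPoint a μ b‖ ^ 2 ≤
      proxObjective a μ b x :=
  have ⟨hv, hp⟩ := proxPoint_subgradient ha hμ b
  proxObjective_add_le_of_subgradient hv hp x

end ProxOfNormPenalty

noncomputable def softThreshold (x t : ℝ) : ℝ := Real.sign x * max (|x| - t) 0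

theorem softThreshold_of_abs_le {x t : ℝ} (h : |x| ≤ t) : softThreshold x t = 0 := by
  rw [softThreshold, max_eq_right (sub_nonpos.mpr h), mul_zero]

theorem softThreshold_of_neg_of_lt {x t : ℝ} (hx : x < 0) (h : t < |x|) :
    softThreshold x t = x + t := by
  rw [abs_of_neg hx] at h
  rw [softThreshold, Real.sign_of_neg hx, abs_of_neg hx, max_eq_left (by linarith)]
  ring

theorem softThreshold_of_pos_of_lt {x t : ℝ} (hx : 0 < x) (h : t < |x|) :
    softThreshold x t = x - t := by
  rw [abs_of_pos hx] at h
  rw [softThreshold, Real.sign_of_pos hx, abs_of_pos hx, max_eq_left (by linarith)]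
  ring

theorem abs_sub_softThreshold_le (x : ℝ) {t : ℝ} (ht : 0 ≤ t) : |x - softThreshold x t| ≤ t := by
  rcases le_or_gt |x| t with h | h
  · rwa [softThreshold_of_abs_le h, sub_zero]
  · rcases lt_trichotomy x 0 with hx | rfl | hx
    · rw [softThreshold_of_neg_of_lt hx h, sub_add_cancel_left, abs_neg, abs_of_nonneg ht]
    · simp [softThreshold, ht]
    · rw [softThreshold_of_pos_of_lt hx h, sub_sub_cancel, abs_of_nonneg ht]

theorem softThreshold_mul_sub_self (x t : ℝ) :
    softThreshold x t * (x - softThreshold x t) = t * |softThreshold x t| := by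
  rcases le_or_gt |x| t with h | h
  · simp [softThreshold_of_abs_le h]
  · rcases lt_trichotomy x 0 with hx | rfl | hx
    · rw [softThreshold_of_neg_of_lt hx h, abs_of_neg (by rw [abs_of_neg hx] at h; linarith)]
      ring
    · simp [softThreshold]
    · rw [softThreshold_of_pos_of_lt hx h, abs_of_pos (by rw [abs_of_pos hx] at h; linarith)]
      ring

theorem norm_toLp_pair (x y : ℝ) : ‖!₂[x, y]‖ = √(x ^ 2 + y ^ 2) := by
  simp [EuclideanSpace.norm_eq, Fin.sum_univ_two]

theorem norm_toLp_pair_sub_sq (x y a b : ℝ) :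
    ‖!₂[x, y] - !₂[a, b]‖ ^ 2 = (x - a) ^ 2 + (y - b) ^ 2 := by
  simp [EuclideanSpace.norm_sq_eq, Fin.sum_univ_two]

/-- Lemma 1: closed form of the proximal operator of
`λ₁‖θ‖₂ + λ₂‖θ‖₂² + λ₃|θ₂|` on ℝ². -/
theorem lemma1_prox_closed_form (b₁ b₂ lam1 lam2 lam3 : ℝ)
    (h1 : 0 < lam1) (h2 : 0 < lam2) (h3 : 0 < lam3) :
    let s : ℝ := Real.sign b₂ * max (|b₂| - lam3) 0
    let c : ℝ := (1/(1+2*lam2)) * max (1 - lam1 / Real.sqrt (b₁^2 + s^2)) 0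
    let l : ℝ → ℝ → ℝ := fun θ₁ θ₂ =>
      (1/2) * ((θ₁ - b₁)^2 + (θ₂ - b₂)^2) + lam1 * Real.sqrt (θ₁^2 + θ₂^2)
        + lam2 * (θ₁^2 + θ₂^2) + lam3 * |θ₂|
    ∀ θ₁ θ₂ : ℝ, (θ₁, θ₂) ≠ (c * b₁, c * s) → l (c * b₁) (c * s) < l θ₁ θ₂ := by
  intro s c l θ₁ θ₂ hne
  have hκ : 0 < 1 + 2 * lam2 := by linarith
  have hc : 0 ≤ c := by positivity
  have hs : s = softThreshold b₂ lam3 := rfl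
  have hsub := abs_sub_softThreshold_le b₂ h3.le
  have hmul := softThreshold_mul_sub_self b₂ lam3
  rw [← hs] at hsub hmul
  have hp : proxPoint lam1 lam2 !₂[b₁, s] = !₂[c * b₁, c * s] := by
    rw [proxPoint, ← WithLp.toLp_smul, norm_toLp_pair]
    simp [c]
  have hG := proxObjective_proxPoint_add_le h1.le hκ !₂[b₁, s] !₂[θ₁, θ₂]
  have hH := inner_sub_le_mul_norm_sub_norm hsub (p := c * s)
    (by rw [Real.inner_apply, Real.norm_eq_abs, abs_mul, abs_of_nonneg hc]
        linear_combination c * hmul) θ₂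
  have hgap : 0 < ‖!₂[θ₁, θ₂] - !₂[c * b₁, c * s]‖ ^ 2 := by
    rw [sq_pos_iff, norm_ne_zero_iff, sub_ne_zero]
    contrapose! hne
    simp_all
  rw [hp] at hG
  simp (disch := positivity) only [proxObjective, norm_toLp_pair, norm_toLp_pair_sub_sq,
    Real.sq_sqrt, Real.inner_apply, Real.norm_eq_abs] at hG hH hgap
  linear_combination hG + hH + (1 + 2 * lam2) / 2 * hgap
end

section
/- Let Vₙ : ℝᵖ → ℝ be a sequence of convex functions converging pointwise to a convex function V that has a unique minimizer u*. If each Vₙ attains a minimizer uₙ and the sequence (uₙ) is bounded, then uₙ → u*. -/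
/-!
A pointwise bounded family of convex functions is bounded above on a small simplex around any
point, by its values at the finitely many vertices; reflecting through the point bounds it below.
A locally uniformly bounded family of convex functions is locally equi-Lipschitz, hence
equicontinuous. Equicontinuity at a cluster point `w` of `(uₙ)` gives `Vₙ(uₙ) ≈ Vₙ(w) → V(w)`
along the indices where `uₙ` is close to `w`, while `Vₙ(uₙ) ≤ Vₙ(u) → V(u)`; so every cluster
point minimizes `V` and equals `u*`. A sequence in a compact set whose only cluster point is `u*`
converges to `u*`.
-/

open Filter Metric Set Topology
open scoped NNReal

lemma equicontinuousAt_of_lipschitzOnWith {ι X Y : Type*} [PseudoEMetricSpace X]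
    [PseudoEMetricSpace Y] {F : ι → X → Y} {K : ℝ≥0} {U : Set X} {x₀ : X} (hU : U ∈ 𝓝 x₀)
    (hF : ∀ i, LipschitzOnWith K (F i) U) : EquicontinuousAt F x₀ := by
  have h := (LipschitzOnWith.uniformEquicontinuousOn F K hF).equicontinuousOn x₀
    (mem_of_mem_nhds hU)
  simpa only [EquicontinuousAt, EquicontinuousWithinAt, nhdsWithin_eq_nhds.2 hU] using h

section ConvexFamily

variable {E ι : Type*} [NormedAddCommGroup E] [NormedSpace ℝ E] {f : ι → E → ℝ} {s : Set E}

lemma exists_uniform_le_on_convexHull {t : Set E} (hf : ∀ i, ConvexOn ℝ s (f i)) (hts : t ⊆ s)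
    (ht : t.Finite) (hbdd : ∀ x ∈ t, BddAbove (range fun i => f i x)) :
    ∃ M, ∀ i, ∀ x ∈ convexHull ℝ t, f i x ≤ M := by
  obtain ⟨M, hM⟩ := ht.bddAbove_biUnion.2 hbdd
  refine ⟨M, fun i x hx => ?_⟩
  obtain ⟨y, hy, hxy⟩ := (hf i).exists_ge_of_mem_convexHull hts hx
  exact hxy.trans (hM (mem_biUnion hy (mem_range_self i)))

lemma exists_uniform_abs_le_nhds [FiniteDimensional ℝ E] {x₀ : E}
    (hf : ∀ i, ConvexOn ℝ s (f i)) (hs : s ∈ 𝓝 x₀)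
    (hbdd : ∀ x ∈ s, BddAbove (range fun i => |f i x|)) :
    ∃ M, ∀ᶠ x in 𝓝 x₀, ∀ i, |f i x| ≤ M := by
  obtain ⟨b, hx₀b, hbs⟩ := exists_mem_interior_convexHull_affineBasis hs
  have hbdd_above : ∀ x ∈ s, BddAbove (range fun i => f i x) := fun x hx =>
    let ⟨C, hC⟩ := hbdd x hx
    ⟨C, forall_mem_range.2 fun i => (le_abs_self _).trans (hC (mem_range_self i))⟩
  obtain ⟨M, hM⟩ := exists_uniform_le_on_convexHull hf ((subset_convexHull ℝ _).trans hbs)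
    (finite_range b) fun x hx => hbdd_above x (hbs (subset_convexHull ℝ _ hx))
  obtain ⟨C, hC⟩ := hbdd x₀ (mem_of_mem_nhds hs)
  have hupper : ∀ᶠ x in 𝓝 x₀, x ∈ s ∧ ∀ i, f i x ≤ M := by
    filter_upwards [mem_interior_iff_mem_nhds.1 hx₀b] with x hx
    exact ⟨hbs hx, fun i => hM i x hx⟩
  have hreflect : Tendsto (fun x => (2 : ℝ) • x₀ - x) (𝓝 x₀) (𝓝 x₀) := by
    have hcont : Continuous fun x : E => (2 : ℝ) • x₀ - x := by fun_prop
    convert hcont.tendsto x₀ using 2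
    rw [two_smul, add_sub_cancel_right]
  refine ⟨M + 2 * C, ?_⟩
  filter_upwards [hupper, hreflect.eventually hupper] with x ⟨hxs, hx⟩ ⟨hx's, hx'⟩ i
  have hmid := (hf i).2 hxs hx's (by norm_num : (0 : ℝ) ≤ 1 / 2) (by norm_num : (0 : ℝ) ≤ 1 / 2)
    (by norm_num)
  have hcomb : (1 / 2 : ℝ) • x + (1 / 2 : ℝ) • ((2 : ℝ) • x₀ - x) = x₀ := by module
  have hfx₀ := abs_le.1 (hC (mem_range_self i))
  have hC0 : 0 ≤ C := (abs_nonneg _).trans (hC (mem_range_self i))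
  rw [hcomb, smul_eq_mul, smul_eq_mul] at hmid
  rw [abs_le]
  constructor <;> linarith [hx i, hx' i]

lemma equicontinuousAt_of_convexOn [FiniteDimensional ℝ E] {x₀ : E}
    (hf : ∀ i, ConvexOn ℝ s (f i)) (hs : s ∈ 𝓝 x₀)
    (hbdd : ∀ x ∈ s, BddAbove (range fun i => |f i x|)) : EquicontinuousAt f x₀ := by
  obtain ⟨M, hM⟩ := exists_uniform_abs_le_nhds hf hs hbdd
  obtain ⟨r, hr, hball⟩ := eventually_nhds_iff_ball.1 (hM.and hs)
  have hlip (i : ι) : LipschitzOnWith (2 * M / (r / 2)).toNNReal (f i) (ball x₀ (r - r / 2)) := by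
    have hconv := (hf i).subset (fun y hy => (hball y hy).2) (convex_ball x₀ r)
    exact hconv.lipschitzOnWith_of_abs_le (half_pos hr) fun y hy => (hball y hy).1 i
  exact equicontinuousAt_of_lipschitzOnWith (ball_mem_nhds x₀ (by linarith)) hlip

end ConvexFamily

lemma MapClusterPt.le_of_equicontinuousAt {ι X : Type*} [TopologicalSpace X] {l : Filter ι}
    {F : ι → X → ℝ} {f : X → ℝ} {x : ι → X} {w u : X} (hw : MapClusterPt w l x)
    (hF : EquicontinuousAt F w) (hFw : Tendsto (F · w) l (𝓝 (f w)))
    (hFu : Tendsto (F · u) l (𝓝 (f u))) (hx : ∀ i, F i (x i) ≤ F i u) : f w ≤ f u := by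
  refine le_of_forall_pos_lt_add fun ε hε => ?_
  have hnear := hw.frequently (Metric.equicontinuousAt_iff_right.1 hF (ε / 3) (by positivity))
  have hw_lt := hFw.eventually (eventually_gt_nhds (by linarith : f w - ε / 3 < f w))
  have hu_lt := hFu.eventually (eventually_lt_nhds (by linarith : f u < f u + ε / 3))
  obtain ⟨i, hi_near, hi_w, hi_u⟩ := (hnear.and_eventually (hw_lt.and hu_lt)).exists
  have := abs_sub_lt_iff.1 (Real.dist_eq _ _ ▸ hi_near i)
  linarith [hx i]

theorem convex_argmin_convergence_general (p : ℕ)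
    (V : ℕ → EuclideanSpace ℝ (Fin p) → ℝ) (Vlim : EuclideanSpace ℝ (Fin p) → ℝ)
    (hVn : ∀ n, ConvexOn ℝ Set.univ (V n))
    (hpt : ∀ u, Tendsto (fun n => V n u) atTop (nhds (Vlim u)))
    (ustar : EuclideanSpace ℝ (Fin p))
    (huniq : ∀ w, (∀ u, Vlim w ≤ Vlim u) → w = ustar)
    (un : ℕ → EuclideanSpace ℝ (Fin p))
    (hun : ∀ n u, V n (un n) ≤ V n u)
    (hbdd : ∃ R, ∀ n, ‖un n‖ ≤ R) :
    Tendsto un atTop (nhds ustar) := by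
  obtain ⟨R, hR⟩ := hbdd
  have hequi : ∀ w, EquicontinuousAt V w := fun w =>
    equicontinuousAt_of_convexOn hVn univ_mem fun u _ => (hpt u).abs.bddAbove_range
  refine (isCompact_closedBall 0 R).tendsto_nhds_of_unique_mapClusterPt
    (Eventually.of_forall fun n => mem_closedBall_zero_iff.2 (hR n)) fun w _ hw => ?_
  exact huniq w fun u => hw.le_of_equicontinuousAt (hequi w) (hpt w) (hpt u) (hun · u)

/-- Deterministic epi-convergence argument: pointwise convergence of convex
functions with bounded minimizers implies convergence of the minimizers to the
unique minimizer of the limit. -/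
theorem convex_argmin_convergence (p : ℕ)
    (V : ℕ → EuclideanSpace ℝ (Fin p) → ℝ) (Vlim : EuclideanSpace ℝ (Fin p) → ℝ)
    (hVn : ∀ n, ConvexOn ℝ Set.univ (V n)) (hV : ConvexOn ℝ Set.univ Vlim)
    (hpt : ∀ u, Tendsto (fun n => V n u) atTop (nhds (Vlim u)))
    (ustar : EuclideanSpace ℝ (Fin p))
    (hmin : ∀ u, Vlim ustar ≤ Vlim u)
    (huniq : ∀ w, (∀ u, Vlim w ≤ Vlim u) → w = ustar)
    (un : ℕ → EuclideanSpace ℝ (Fin p))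
    (hun : ∀ n u, V n (un n) ≤ V n u)
    (hbdd : ∃ R, ∀ n, ‖un n‖ ≤ R) :
    Tendsto un atTop (nhds ustar) :=
  convex_argmin_convergence_general p V Vlim hVn hpt ustar huniq un hun hbdd
end
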